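/- AND_n is computed by a nondeterministic OBDD of width 2, while every nondeterministic unitary OBDD computing AND_n has width at least n+1. Hence for all d₁, d₂ with 1 < d₁, d₂ ≤ n, the class of functions computed by width-d₂ NOBDDs is not contained in the class computed by width-d₁ nondeterministic unitary OBDDs. -/

import Mathlib

open scoped BigOperators

/-- State of a nondeterministic unitary OBDD of width `d` after reading input `x`
in variable order `π`: at step `j` the unitary `U j b` is applied, where `b` is the
value of the tested variable `x_{π j}`. -/
noncomputable def nuRun {n d : ℕ} (U : Fin n → Bool → Matrix (Fin d) (Fin d) ℂ)
    (π : Equiv.Perm (Fin n)) (init : Fin d → ℂ) (x : Fin n → Bool) : Fin d → ℂ :=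
  (List.ofFn fun j : Fin n => U j (x (π j))).foldl (fun v M => M.mulVec v) init

/-- All transition matrices are unitary. -/
def IsUnitaryFamily {n d : ℕ} (U : Fin n → Bool → Matrix (Fin d) (Fin d) ℂ) : Prop :=
  ∀ j b, U j b ∈ Matrix.unitaryGroup (Fin d) ℂ

/-- The initial state is a unit vector. -/
def NormalizedInit {d : ℕ} (init : Fin d → ℂ) : Prop :=
  ∑ q, ‖init q‖ ^ 2 = 1

/-- Nondeterministic acceptance: the projection of the final state onto the
accepting subspace (spanned by the accepting basis states `acc`) is nonzero. -/
def nuAccepts {n d : ℕ} (U : Fin n → Bool → Matrix (Fin d) (Fin d) ℂ)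
    (π : Equiv.Perm (Fin n)) (init : Fin d → ℂ) (acc : Finset (Fin d))
    (x : Fin n → Bool) : Prop :=
  ∃ q ∈ acc, nuRun U π init x q ≠ 0

/-- The NUOBDD computes `f`: it accepts exactly the inputs in `f⁻¹(1)`. -/
def nuComputes {n d : ℕ} (U : Fin n → Bool → Matrix (Fin d) (Fin d) ℂ)
    (π : Equiv.Perm (Fin n)) (init : Fin d → ℂ) (acc : Finset (Fin d))
    (f : (Fin n → Bool) → Bool) : Prop :=
  ∀ x, nuAccepts U π init acc x ↔ f x = true

/-- Number of 1s in the input. -/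
def countOnes {n : ℕ} (x : Fin n → Bool) : ℕ :=
  (Finset.univ.filter fun i => x i = true).card

/-- Nondeterministic acceptance for an NOBDD of width `d`: there is a computation
path starting at `s0`, following at each step `j` the nondeterministic transition
relation `step j b` on the tested bit value `b = x (π j)`, and ending in an
accepting node. -/
def noAccepts {n d : ℕ} (step : Fin n → Bool → Fin d → Fin d → Prop)
    (π : Equiv.Perm (Fin n)) (s0 : Fin d) (acc : Finset (Fin d))
    (x : Fin n → Bool) : Prop :=
  ∃ path : Fin (n + 1) → Fin d, path 0 = s0 ∧
    (∀ j : Fin n, step j (x (π j)) (path j.castSucc) (path j.succ)) ∧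
    path (Fin.last n) ∈ acc

/-- The NOBDD computes `f`: it accepts exactly the inputs in `f⁻¹(1)`. -/
def noComputes {n d : ℕ} (step : Fin n → Bool → Fin d → Fin d → Prop)
    (π : Equiv.Perm (Fin n)) (s0 : Fin d) (acc : Finset (Fin d))
    (f : (Fin n → Bool) → Bool) : Prop :=
  ∀ x, noAccepts step π s0 acc x ↔ f x = true

/-- `AND_n(σ) = 1` iff all bits of `σ` are 1. -/
def ANDn (n : ℕ) (x : Fin n → Bool) : Bool := decide (∀ i, x i = true)

/-- `f` is computed by some nondeterministic OBDD of width `d`. -/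
def computedByNOBDD (n d : ℕ) (f : (Fin n → Bool) → Bool) : Prop :=
  ∃ (step : Fin n → Bool → Fin d → Fin d → Prop) (π : Equiv.Perm (Fin n))
    (s0 : Fin d) (acc : Finset (Fin d)), noComputes step π s0 acc f

/-- `f` is computed by some nondeterministic unitary OBDD of width `d`. -/
def computedByNUOBDD (n d : ℕ) (f : (Fin n → Bool) → Bool) : Prop :=
  ∃ (U : Fin n → Bool → Matrix (Fin d) (Fin d) ℂ) (π : Equiv.Perm (Fin n))
    (init : Fin d → ℂ) (acc : Finset (Fin d)),
    IsUnitaryFamily U ∧ NormalizedInit init ∧ nuComputes U π init acc f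

/-!
The final states of a unitary OBDD on the `n + 1` staircase inputs `1ᵏ0ⁿ⁻ᵏ` are linearly
independent, so its width is at least `n + 1`. Fix an accepting state `q` at which `1ⁿ` has
nonzero amplitude. Since the layers are invertible, the state after `j` steps can be recovered
from the final state by undoing the all-zero suffix; redoing it with all ones and reading
coordinate `q` is a linear functional that sends the final state of `1ᵏ0ⁿ⁻ᵏ` (`k ≤ j`) to the
amplitude of `1ᵏ0ʲ⁻ᵏ1ⁿ⁻ʲ` at `q`. This vanishes for `k < j` because AND rejects that input and
not for `k = j`, so the functionals are triangular against the states. A nondeterministic OBDD,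
by contrast, computes AND with one node per level that only has an edge for the bit `1`.
-/

open Matrix

theorem linearIndependent_of_triangular {R M ι : Type*} [CommRing R] [NoZeroDivisors R]
    [AddCommGroup M] [Module R M] [Fintype ι] [LinearOrder ι] {v : ι → M}
    (φ : ι → Module.Dual R M) (h_lt : ∀ i j, i < j → φ j (v i) = 0)
    (h_diag : ∀ i, φ i (v i) ≠ 0) : LinearIndependent R v := by
  classical
  rw [Fintype.linearIndependent_iff]
  intro g hg
  by_contra! hne
  let s := Finset.univ.filter fun i => g i ≠ 0
  have hs : s.Nonempty := by
    obtain ⟨i, hi⟩ := hne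
    exact ⟨i, by simp [s, hi]⟩
  let j := s.max' hs
  have hj : g j ≠ 0 := (Finset.mem_filter.mp (s.max'_mem hs)).2
  have key := congrArg (φ j) hg
  rw [map_sum, map_zero, Finset.sum_eq_single j] at key
  · exact mul_ne_zero hj (h_diag j) (by simpa using key)
  · intro i _ hij
    rcases lt_or_gt_of_ne hij with h | h
    · simp [h_lt i j h]
    · have : g i = 0 := by
        by_contra hgi
        exact (s.le_max' i (by simp [s, hgi])).not_gt h
      simp [this]
  · simp

theorem List.foldl_mulVec {m R : Type*} [Fintype m] [DecidableEq m] [Semiring R]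
    (L : List (Matrix m m R)) (v : m → R) :
    L.foldl (fun v M => M *ᵥ v) v = L.reverse.prod *ᵥ v := by
  induction L generalizing v with
  | nil => simp
  | cons M L ih => simp [ih, mulVec_mulVec]

theorem List.prod_reverse_eq_drop_mul_take {M : Type*} [Monoid M] (L : List M) (j : ℕ) :
    L.reverse.prod = (L.drop j).reverse.prod * (L.take j).reverse.prod := by
  rw [← List.prod_append, ← List.reverse_append, List.take_append_drop]

theorem ANDn_comp_perm {n : ℕ} (x : Fin n → Bool) (σ : Equiv.Perm (Fin n)) :
    ANDn n (x ∘ σ) = ANDn n x := by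
  simp only [ANDn, Function.comp_apply]
  exact decide_eq_decide.mpr (σ.forall_congr_right (q := fun i => x i = true))

theorem computedByNOBDD_ANDn {n d : ℕ} (hd : 0 < d) : computedByNOBDD n d (ANDn n) := by
  refine ⟨fun _ b _ _ => b = true, 1, ⟨0, hd⟩, Finset.univ, fun x => ?_⟩
  simp only [noAccepts, ANDn, Equiv.Perm.one_apply, Finset.mem_univ, and_true,
    decide_eq_true_eq]
  exact ⟨fun ⟨_, _, h⟩ => h, fun h => ⟨fun _ => ⟨0, hd⟩, rfl, h⟩⟩

section UnitaryRun

variable {n d : ℕ} (U : Fin n → Bool → Matrix (Fin d) (Fin d) ℂ)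

theorem nuRun_eq_nuRun_one (π : Equiv.Perm (Fin n)) (init : Fin d → ℂ) (x : Fin n → Bool) :
    nuRun U π init x = nuRun U 1 init (x ∘ π) := rfl

theorem nuComputes_one_of_comp_perm {π : Equiv.Perm (Fin n)} {init : Fin d → ℂ}
    {acc : Finset (Fin d)} {f : (Fin n → Bool) → Bool}
    (hf : ∀ x (σ : Equiv.Perm (Fin n)), f (x ∘ σ) = f x)
    (h : nuComputes U π init acc f) : nuComputes U 1 init acc f := by
  intro x
  have := h (x ∘ π.symm)
  rwa [nuAccepts, nuRun_eq_nuRun_one, Function.comp_assoc, π.symm_comp_self,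
    Function.comp_id, hf] at this

def nuLayers (x : Fin n → Bool) : List (Matrix (Fin d) (Fin d) ℂ) :=
  List.ofFn fun j => U j (x j)

def nuSuffixMatrix (x : Fin n → Bool) (j : ℕ) : Matrix (Fin d) (Fin d) ℂ :=
  ((nuLayers U x).drop j).reverse.prod

variable {U}

theorem take_nuLayers_congr {x x' : Fin n → Bool} {j : ℕ}
    (h : ∀ i : Fin n, ↑i < j → x i = x' i) :
    (nuLayers U x).take j = (nuLayers U x').take j := by
  refine List.ext_getElem (by simp [nuLayers]) fun i hi _ => ?_
  simp only [nuLayers, List.length_take, List.length_ofFn] at hi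
  simp [nuLayers, h ⟨i, by omega⟩ (by simp; omega)]

theorem nuSuffixMatrix_congr {x x' : Fin n → Bool} {j : ℕ}
    (h : ∀ i : Fin n, j ≤ ↑i → x i = x' i) :
    nuSuffixMatrix U x j = nuSuffixMatrix U x' j := by
  rw [nuSuffixMatrix, nuSuffixMatrix]
  congr 2
  refine List.ext_getElem (by simp [nuLayers]) fun i hi _ => ?_
  simp only [nuLayers, List.length_drop, List.length_ofFn] at hi
  simp [nuLayers, h ⟨j + i, by omega⟩ (by simp)]

theorem nuSuffixMatrix_mem_unitaryGroup (hU : IsUnitaryFamily U) (x : Fin n → Bool) (j : ℕ) :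
    nuSuffixMatrix U x j ∈ unitaryGroup (Fin d) ℂ :=
  list_prod_mem fun M hM => by
    obtain ⟨i, -, rfl⟩ := List.mem_ofFn.mp (List.mem_of_mem_drop (List.mem_reverse.mp hM))
    exact hU i (x i)

theorem nuRun_one_eq_suffixMatrix_mul (init : Fin d → ℂ) (x : Fin n → Bool) (j : ℕ) :
    nuRun U 1 init x = (nuSuffixMatrix U x j * ((nuLayers U x).take j).reverse.prod) *ᵥ init := by
  rw [nuSuffixMatrix, ← List.prod_reverse_eq_drop_mul_take, ← List.foldl_mulVec]
  rfl

theorem nuRun_one_eq_of_eq_below (hU : IsUnitaryFamily U) (init : Fin d → ℂ)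
    {x x' : Fin n → Bool} {j : ℕ} (h : ∀ i : Fin n, ↑i < j → x i = x' i) :
    nuRun U 1 init x' =
      (nuSuffixMatrix U x' j * star (nuSuffixMatrix U x j)) *ᵥ nuRun U 1 init x := by
  rw [nuRun_one_eq_suffixMatrix_mul init x j, nuRun_one_eq_suffixMatrix_mul init x' j,
    mulVec_mulVec, take_nuLayers_congr h, Matrix.mul_assoc, ← Matrix.mul_assoc (star _),
    Unitary.star_mul_self_of_mem (nuSuffixMatrix_mem_unitaryGroup hU x j), one_mul]

def staircase (k : ℕ) : Fin n → Bool := fun i => decide (↑i < k)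

theorem le_width_of_nuComputes_ANDn (hU : IsUnitaryFamily U) {init : Fin d → ℂ}
    {acc : Finset (Fin d)} (hc : nuComputes U 1 init acc (ANDn n)) : n + 1 ≤ d := by
  obtain ⟨qs, hqs, h_ones⟩ : ∃ q ∈ acc, nuRun U 1 init (fun _ => true) q ≠ 0 :=
    (hc _).mpr (by simp [ANDn])
  have h_rej : ∀ (x : Fin n → Bool) (i : Fin n), x i = false → nuRun U 1 init x qs = 0 := by
    intro x i hi
    by_contra hne
    have := (hc x).mp ⟨qs, hqs, hne⟩
    simp_all [ANDn]
  let v : Fin (n + 1) → Fin d → ℂ := fun k => nuRun U 1 init (staircase k)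
  let φ : Fin (n + 1) → Module.Dual ℂ (Fin d → ℂ) := fun j => (LinearMap.proj qs).comp
    (mulVecLin (nuSuffixMatrix U (fun _ => true) j * star (nuSuffixMatrix U (staircase j) j)))
  have hφ : ∀ k j : Fin (n + 1), k ≤ j →
      φ j (v k) = nuRun U 1 init (fun i => staircase k i || decide (↑j ≤ (i : ℕ))) qs := by
    intro k j hkj
    have h_ones : nuSuffixMatrix U (fun _ => true) j =
        nuSuffixMatrix U (fun i => staircase k i || decide (↑j ≤ (i : ℕ))) j :=
      nuSuffixMatrix_congr fun i hi => by simp [hi]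
    have h_staircase : nuSuffixMatrix U (staircase j) j = nuSuffixMatrix U (staircase k) j :=
      nuSuffixMatrix_congr fun i hi => by simp [staircase]; omega
    rw [nuRun_one_eq_of_eq_below hU init (x := staircase k) (j := j) fun i hi => by simp [hi],
      ← h_ones, ← h_staircase]
    rfl
  have hli : LinearIndependent ℂ v := by
    refine linearIndependent_of_triangular φ (fun k j hkj => ?_) (fun j => ?_)
    · rw [hφ k j hkj.le]
      exact h_rej _ ⟨k, by omega⟩ (by simp [staircase, hkj])
    · rw [hφ j j le_rfl]
      convert h_ones using 2
      funext i
      simp only [staircase, Bool.or_eq_true, decide_eq_true_eq]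
      omega
  simpa using hli.fintype_card_le_finrank

end UnitaryRun

theorem le_width_of_computedByNUOBDD_ANDn {n d : ℕ} (h : computedByNUOBDD n d (ANDn n)) :
    n + 1 ≤ d := by
  obtain ⟨U, π, init, acc, hU, -, hc⟩ := h
  exact le_width_of_nuComputes_ANDn hU (nuComputes_one_of_comp_perm U ANDn_comp_perm hc)

theorem nobdd_not_subset_nuobdd_general (n : ℕ) :
    computedByNOBDD n 2 (ANDn n) ∧
    (∀ d, computedByNUOBDD n d (ANDn n) → n + 1 ≤ d) ∧
    (∀ d₁ d₂, 1 < d₁ → d₁ ≤ n → 1 < d₂ → d₂ ≤ n →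
      ∃ f : (Fin n → Bool) → Bool,
        computedByNOBDD n d₂ f ∧ ¬ computedByNUOBDD n d₁ f) := by
  refine ⟨computedByNOBDD_ANDn two_pos, fun _ => le_width_of_computedByNUOBDD_ANDn,
    fun d₁ d₂ _ hd₁n hd₂ _ => ⟨ANDn n, computedByNOBDD_ANDn (by omega), fun h => ?_⟩⟩
  have := le_width_of_computedByNUOBDD_ANDn h
  omega

/-- `AND_n` is computed by a nondeterministic OBDD of width 2, while every
nondeterministic unitary OBDD computing `AND_n` has width at least `n + 1`.
Hence for all `d₁, d₂` with `1 < d₁, d₂ ≤ n`, the class of functions computed by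
width-`d₂` NOBDDs is not contained in the class computed by width-`d₁`
nondeterministic unitary OBDDs. -/
theorem nobdd_not_subset_nuobdd (n : ℕ) (hn : 1 ≤ n) :
    computedByNOBDD n 2 (ANDn n) ∧
    (∀ d, computedByNUOBDD n d (ANDn n) → n + 1 ≤ d) ∧
    (∀ d₁ d₂, 1 < d₁ → d₁ ≤ n → 1 < d₂ → d₂ ≤ n →
      ∃ f : (Fin n → Bool) → Bool,
        computedByNOBDD n d₂ f ∧ ¬ computedByNUOBDD n d₁ f) :=
  nobdd_not_subset_nuobdd_general n
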